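/- arXiv:2603.19726 — 7 statements merged into one kernel-verified Lean document; each statement's English description precedes it below -/
import Mathlib

section
/- Let Ω > 0, T > 0 and t ∈ [0, T]. Define G(t, s) := [sinh(2Ωt)·sinh(2Ω(T − s)) − (if s ≤ t then sinh(2ΩT)·sinh(2Ω(t − s)) else 0)]/(Ω·sinh(2ΩT)). Then ∫₀ᵀ G(t, s) ds = sinh(Ω(T − t))·sinh(Ωt)/(Ω²·cosh(ΩT)). -/
/-!
The step function only cuts the second term down to `s ∈ [0, t]`, so the integral is
`(sinh(2Ωt) · ∫₀ᵀ sinh(2Ω(T−s)) ds − sinh(2ΩT) · ∫₀ᵗ sinh(2Ω(t−s)) ds) / (Ω sinh(2ΩT))`.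
Since `−sinh²(Ω(d−s))/Ω` is an antiderivative of `sinh(2Ω(d−s))`, each of these integrals is
`sinh²(Ωd)/Ω`, and the double-angle and subtraction formulas for `sinh` finish the computation.
-/

open Real Set MeasureTheory

theorem intervalIntegral.integral_ite_le {E : Type*} [NormedAddCommGroup E] [NormedSpace ℝ E]
    {μ : Measure ℝ} {f : ℝ → E} {a b t : ℝ} (ht : t ∈ Icc a b) :
    ∫ x in a..b, (if x ≤ t then f x else 0) ∂μ = ∫ x in a..t, f x ∂μ :=
  intervalIntegral.integral_indicator ht

theorem IntervalIntegrable.ite_le {E : Type*} [NormedAddCommGroup E]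
    {μ : Measure ℝ} {f : ℝ → E} {a b : ℝ} (hf : IntervalIntegrable f μ a b) (t : ℝ) :
    IntervalIntegrable (fun x => if x ≤ t then f x else 0) μ a b :=
  intervalIntegrable_iff.2 ((intervalIntegrable_iff.1 hf).indicator (measurableSet_Iic (a := t)))

theorem hasDerivAt_neg_sinh_mul_sub_sq_div {Ω : ℝ} (hΩ : Ω ≠ 0) (d s : ℝ) :
    HasDerivAt (fun s => -(sinh (Ω * (d - s)) ^ 2 / Ω)) (sinh (2 * Ω * (d - s))) s := by
  have hinner : HasDerivAt (fun s => Ω * (d - s)) (Ω * -1) s :=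
    ((hasDerivAt_id' s).const_sub d).const_mul Ω
  refine ((hinner.sinh.fun_pow 2).div_const Ω).fun_neg.congr_deriv ?_
  rw [show 2 * Ω * (d - s) = 2 * (Ω * (d - s)) by ring, sinh_two_mul]
  field_simp
  simp

theorem integral_sinh_two_mul_sub {Ω : ℝ} (hΩ : Ω ≠ 0) (d : ℝ) :
    ∫ s in (0 : ℝ)..d, sinh (2 * Ω * (d - s)) = sinh (Ω * d) ^ 2 / Ω := by
  have hcont : Continuous fun s => sinh (2 * Ω * (d - s)) := by fun_prop
  rw [intervalIntegral.integral_eq_sub_of_hasDerivAt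
    (fun s _ => hasDerivAt_neg_sinh_mul_sub_sq_div hΩ d s) (hcont.intervalIntegrable _ _)]
  simp

theorem sinh_two_mul_mul_sinh_sq_sub (x y : ℝ) :
    sinh (2 * x) * sinh y ^ 2 - sinh (2 * y) * sinh x ^ 2 =
      2 * sinh x * sinh y * sinh (y - x) := by
  rw [sinh_two_mul, sinh_two_mul, sinh_sub]
  ring

/-- The integral over `s ∈ [0, T]` of the Dirichlet Green function
`G(t, s) = [sinh(2Ωt)·sinh(2Ω(T−s)) − θ(t−s)·sinh(2ΩT)·sinh(2Ω(t−s))]/(Ω·sinh(2ΩT))`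
equals `sinh(Ω(T−t))·sinh(Ωt)/(Ω²·cosh(ΩT))`. -/
theorem integral_dirichlet_green_function (Ω T t : ℝ) (hΩ : 0 < Ω) (hT : 0 < T)
    (ht : t ∈ Set.Icc 0 T) :
    (∫ s in (0 : ℝ)..T,
        (Real.sinh (2 * Ω * t) * Real.sinh (2 * Ω * (T - s)) -
            (if s ≤ t then Real.sinh (2 * Ω * T) * Real.sinh (2 * Ω * (t - s)) else 0)) /
          (Ω * Real.sinh (2 * Ω * T))) =
      Real.sinh (Ω * (T - t)) * Real.sinh (Ω * t) / (Ω ^ 2 * Real.cosh (Ω * T)) := by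
  have hsinh : sinh (Ω * T) ≠ 0 := (sinh_pos_iff.2 (by positivity)).ne'
  have hcont (d : ℝ) : Continuous fun s => sinh (2 * Ω * (d - s)) := by fun_prop
  rw [intervalIntegral.integral_div,
    intervalIntegral.integral_sub (((hcont T).intervalIntegrable _ _).const_mul _)
      ((((hcont t).intervalIntegrable _ _).const_mul _).ite_le t),
    intervalIntegral.integral_const_mul, intervalIntegral.integral_ite_le ht,
    intervalIntegral.integral_const_mul,
    integral_sinh_two_mul_sub hΩ.ne', integral_sinh_two_mul_sub hΩ.ne']
  have hnum : sinh (2 * Ω * t) * sinh (Ω * T) ^ 2 - sinh (2 * Ω * T) * sinh (Ω * t) ^ 2 =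
      2 * sinh (Ω * t) * sinh (Ω * T) * sinh (Ω * (T - t)) := by
    simpa only [mul_assoc, mul_sub] using sinh_two_mul_mul_sinh_sq_sub (Ω * t) (Ω * T)
  have hden : sinh (2 * Ω * T) = 2 * sinh (Ω * T) * cosh (Ω * T) := by
    rw [mul_assoc, sinh_two_mul]
  calc _ = (sinh (2 * Ω * t) * sinh (Ω * T) ^ 2 - sinh (2 * Ω * T) * sinh (Ω * t) ^ 2) /
        (Ω ^ 2 * sinh (2 * Ω * T)) := by ring
    _ = _ := by
      rw [hnum, hden]
      field_simp
end

section
/- Let Ω > 0, T > 0 and s ∈ (0, T). Define h₁, h₂ : ℝ → ℝ by h₁(t) = (1/(2Ω))·(−1/(ΩT) + cosh(Ω(T + 2t − 2s))/sinh(ΩT)) and h₂(t) = h₁(t) − sinh(2Ω(t − s))/Ω. Then: (i) for every t ∈ ℝ, −(1/2)h₁''(t) + 2Ω²·h₁(t) = −1/T and −(1/2)h₂''(t) + 2Ω²·h₂(t) = −1/T; (ii) h₁(0) = h₂(T); (iii) h₂'(s) − h₁'(s) = −2; (iv) ∫₀ˢ h₁(t) dt + ∫ₛᵀ h₂(t)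 dt = 0. -/
/-!
The second branch is the translate `h₂(t) = h₁(t − T)` of the first, by the addition formula
for `cosh`: the Green function depends only on `t − s` modulo `T`. Periodicity is then immediate,
the equation for `h₂` follows from that for `h₁`, the jump is `h₁'(s − T) − h₁'(s)`, and the two
integrals combine into `∫_{s−T}^{s} h₁`, an integral over a full period. Finally
`h₁ = a + b cosh(2Ωt + φ)` and `−(1/2)d²/dt² + 2Ω²` annihilates `cosh(2Ωt + φ)`.
-/

open Real

noncomputable def hyperbolicComb (a b c ω φ : ℝ) (t : ℝ) : ℝ :=
  a + b * cosh (ω * t + φ) + c * sinh (ω * t + φ)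

section hyperbolicComb

variable (a b c ω φ : ℝ)

theorem hasDerivAt_hyperbolicComb (t : ℝ) :
    HasDerivAt (hyperbolicComb a b c ω φ) (hyperbolicComb 0 (c * ω) (b * ω) ω φ t) t := by
  have hlin : HasDerivAt (fun x => ω * x + φ) ω t := by
    simpa using ((hasDerivAt_id t).const_mul ω).add_const φ
  refine (((hlin.cosh.const_mul b).const_add a).add (hlin.sinh.const_mul c)).congr_deriv ?_
  simp only [hyperbolicComb]
  ring

theorem deriv_hyperbolicComb :
    deriv (hyperbolicComb a b c ω φ) = hyperbolicComb 0 (c * ω) (b * ω) ω φ :=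
  funext fun t => (hasDerivAt_hyperbolicComb a b c ω φ t).deriv

theorem deriv_deriv_hyperbolicComb (t : ℝ) :
    deriv (deriv (hyperbolicComb a b c ω φ)) t = ω ^ 2 * (hyperbolicComb a b c ω φ t - a) := by
  simp only [deriv_hyperbolicComb, hyperbolicComb]
  ring

theorem continuous_hyperbolicComb : Continuous (hyperbolicComb a b c ω φ) := by
  unfold hyperbolicComb
  fun_prop

theorem integral_hyperbolicComb (hω : ω ≠ 0) (x y : ℝ) :
    ∫ t in x..y, hyperbolicComb a b c ω φ t =
      a * (y - x) + (b * (sinh (ω * y + φ) - sinh (ω * x + φ)) +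
        c * (cosh (ω * y + φ) - cosh (ω * x + φ))) / ω := by
  have hprim (t : ℝ) : HasDerivAt (fun t => a * t + hyperbolicComb 0 (c / ω) (b / ω) ω φ t)
      (hyperbolicComb a b c ω φ t) t := by
    refine (((hasDerivAt_id t).const_mul a).add
      (hasDerivAt_hyperbolicComb 0 (c / ω) (b / ω) ω φ t)).congr_deriv ?_
    simp only [hyperbolicComb]
    field_simp
    ring
  rw [intervalIntegral.integral_eq_sub_of_hasDerivAt (fun t _ => hprim t)
    ((continuous_hyperbolicComb a b c ω φ).intervalIntegrable _ _)]
  simp only [hyperbolicComb]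
  field_simp
  ring

theorem greenOperator_hyperbolicComb (Ω t : ℝ) :
    -(1 / 2) * deriv (deriv (hyperbolicComb a b c (2 * Ω) φ)) t +
      2 * Ω ^ 2 * hyperbolicComb a b c (2 * Ω) φ t = 2 * Ω ^ 2 * a := by
  rw [deriv_deriv_hyperbolicComb]
  ring

end hyperbolicComb

theorem deriv_deriv_comp_sub_const (f : ℝ → ℝ) (d t : ℝ) :
    deriv (deriv fun x => f (x - d)) t = deriv (deriv f) (t - d) := by
  rw [show (deriv fun x => f (x - d)) = fun x => deriv f (x - d) from
    funext fun x => deriv_comp_sub_const f d x, deriv_comp_sub_const]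

theorem string_inspired_green_function_properties_general (Ω T s : ℝ) (hΩ : 0 < Ω) (hT : 0 < T)
    (h₁ h₂ : ℝ → ℝ)
    (hh₁ : h₁ = fun t => (1 / (2 * Ω)) *
      (-(1 / (Ω * T)) + Real.cosh (Ω * (T + 2 * t - 2 * s)) / Real.sinh (Ω * T)))
    (hh₂ : h₂ = fun t => h₁ t - Real.sinh (2 * Ω * (t - s)) / Ω) :
    (∀ t : ℝ, -(1 / 2) * deriv (deriv h₁) t + 2 * Ω ^ 2 * h₁ t = -(1 / T) ∧
              -(1 / 2) * deriv (deriv h₂) t + 2 * Ω ^ 2 * h₂ t = -(1 / T)) ∧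
    h₁ 0 = h₂ T ∧
    deriv h₂ s - deriv h₁ s = -2 ∧
    (∫ t in (0 : ℝ)..s, h₁ t) + (∫ t in s..T, h₂ t) = 0 := by
  have hsinh : sinh (Ω * T) ≠ 0 := (sinh_pos_iff.2 (mul_pos hΩ hT)).ne'
  have hshift : h₂ = fun t => h₁ (t - T) := by
    subst hh₂ hh₁
    funext t
    simp only
    rw [show Ω * (T + 2 * t - 2 * s) = 2 * Ω * (t - s) + Ω * T by ring,
      show Ω * (T + 2 * (t - T) - 2 * s) = 2 * Ω * (t - s) - Ω * T by ring, cosh_add, cosh_sub]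
    field_simp
    ring
  have hcomb : h₁ = hyperbolicComb (-1 / (2 * Ω ^ 2 * T)) (1 / (2 * Ω * sinh (Ω * T))) 0
      (2 * Ω) (Ω * (T - 2 * s)) := by
    subst hh₁
    funext t
    simp only [hyperbolicComb]
    field_simp
    ring_nf
  have hat_s : 2 * Ω * s + Ω * (T - 2 * s) = Ω * T := by ring
  have hat_s_sub_T : 2 * Ω * (s - T) + Ω * (T - 2 * s) = -(Ω * T) := by ring
  have hode (t : ℝ) : -(1 / 2) * deriv (deriv h₁) t + 2 * Ω ^ 2 * h₁ t = -(1 / T) := by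
    rw [hcomb, greenOperator_hyperbolicComb]
    field_simp
  refine ⟨fun t => ⟨hode t, ?_⟩, ?_, ?_, ?_⟩
  · rw [hshift, deriv_deriv_comp_sub_const, hode]
  · simp only [hshift, sub_self]
  · rw [hshift, deriv_comp_sub_const, hcomb, deriv_hyperbolicComb]
    simp only [hyperbolicComb]
    rw [hat_s, hat_s_sub_T, sinh_neg]
    field_simp
    ring
  · have hcont : Continuous h₁ := hcomb ▸ continuous_hyperbolicComb ..
    rw [hshift, intervalIntegral.integral_comp_sub_right (fun t => h₁ t), sub_self, add_comm,
      intervalIntegral.integral_add_adjacent_intervals (hcont.intervalIntegrable _ _)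
        (hcont.intervalIntegrable _ _), hcomb,
      integral_hyperbolicComb _ _ _ _ _ (by positivity), hat_s, hat_s_sub_T, sinh_neg]
    field_simp
    ring

/-- The two branches of the string-inspired Green function of `−(1/2)d²/dt² + 2Ω²` on `[0, T]`:
the inhomogeneous equation with source `−1/T` on each branch, periodicity `h₁(0) = h₂(T)`,
the jump `−2` of the first derivative across `t = s`, and the vanishing average. -/
theorem string_inspired_green_function_properties (Ω T s : ℝ) (hΩ : 0 < Ω) (hT : 0 < T)
    (hs : s ∈ Set.Ioo 0 T) (h₁ h₂ : ℝ → ℝ)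
    (hh₁ : h₁ = fun t => (1 / (2 * Ω)) *
      (-(1 / (Ω * T)) + Real.cosh (Ω * (T + 2 * t - 2 * s)) / Real.sinh (Ω * T)))
    (hh₂ : h₂ = fun t => h₁ t - Real.sinh (2 * Ω * (t - s)) / Ω) :
    (∀ t : ℝ, -(1 / 2) * deriv (deriv h₁) t + 2 * Ω ^ 2 * h₁ t = -(1 / T) ∧
              -(1 / 2) * deriv (deriv h₂) t + 2 * Ω ^ 2 * h₂ t = -(1 / T)) ∧
    h₁ 0 = h₂ T ∧
    deriv h₂ s - deriv h₁ s = -2 ∧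
    (∫ t in (0 : ℝ)..s, h₁ t) + (∫ t in s..T, h₂ t) = 0 :=
  string_inspired_green_function_properties_general Ω T s hΩ hT h₁ h₂ hh₁ hh₂
end

section
/- Let D be a natural number with D ≥ 2. In the polynomial ring ℤ[z, ω], the coefficient of the monomial z²ω² in (z + 1)^(D−2)·(ω + 1)^(D−2)·(z − ω)²·(z·ω − 1) equals D² − 3D. -/
open MvPolynomial

open Finsupp in
noncomputable def M4 : MvPolynomial (Fin 2) ℤ :=
  (X 0 - X 1) ^ 2 * (X 0 * X 1 - 1)

noncomputable def Q4 (n : ℕ) : MvPolynomial (Fin 2) ℤ :=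
  (X 0 + 1) ^ n * (X 1 + 1) ^ n * M4

noncomputable def mono (a b : ℕ) : Fin 2 →₀ ℕ := Finsupp.single 0 a + Finsupp.single 1 b

lemma mono_eq_iff (a b c d : ℕ) : mono a b = mono c d ↔ a = c ∧ b = d := by
  simp [mono, Finsupp.ext_iff, Fin.forall_fin_two, Finsupp.single_apply]

lemma coeff_mono_pow (a b c d : ℕ) :
    coeff (mono a b) ((X 0 : MvPolynomial (Fin 2) ℤ) ^ c * X 1 ^ d) =
      if c = a ∧ d = b then 1 else 0 := by
  rw [X_pow_eq_monomial, X_pow_eq_monomial, monomial_mul, one_mul, ← mono, coeff_monomial]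
  simp only [mono_eq_iff]

lemma M4_eq : M4 = C 1 * (X 0 ^ 3 * X 1 ^ 1) + C (-2) * (X 0 ^ 2 * X 1 ^ 2)
    + C 1 * (X 0 ^ 1 * X 1 ^ 3) + C (-1) * (X 0 ^ 2 * X 1 ^ 0)
    + C 2 * (X 0 ^ 1 * X 1 ^ 1) + C (-1) * (X 0 ^ 0 * X 1 ^ 2) := by
  simp only [map_neg, map_one, map_ofNat, M4]
  ring

lemma coeff_M4 (a b : ℕ) : coeff (mono a b) M4 =
    (if 3 = a ∧ 1 = b then 1 else 0) + (if 2 = a ∧ 2 = b then -2 else 0)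
    + (if 1 = a ∧ 3 = b then 1 else 0) + (if 2 = a ∧ 0 = b then -1 else 0)
    + (if 1 = a ∧ 1 = b then 2 else 0) + (if 0 = a ∧ 2 = b then -1 else 0) := by
  rw [M4_eq]
  simp only [coeff_add, coeff_C_mul, coeff_mono_pow, mul_ite, mul_one, mul_zero, one_mul,
    neg_mul]

lemma mono_succ_left (a b : ℕ) : mono (a + 1) b = mono a b + Finsupp.single 0 1 := by
  unfold mono; rw [Finsupp.single_add]; abel

lemma mono_succ_right (a b : ℕ) : mono a (b + 1) = mono a b + Finsupp.single 1 1 := by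
  unfold mono; rw [Finsupp.single_add, add_assoc]

lemma coeff_mul_X0 (a b : ℕ) (ha : a ≠ 0) (p : MvPolynomial (Fin 2) ℤ) :
    coeff (mono a b) (p * X 0) = coeff (mono (a - 1) b) p := by
  obtain ⟨a, rfl⟩ := Nat.exists_eq_succ_of_ne_zero ha
  rw [mono_succ_left, coeff_mul_X, Nat.succ_sub_one]

lemma coeff_mul_X1 (a b : ℕ) (hb : b ≠ 0) (p : MvPolynomial (Fin 2) ℤ) :
    coeff (mono a b) (p * X 1) = coeff (mono a (b - 1)) p := by
  obtain ⟨b, rfl⟩ := Nat.exists_eq_succ_of_ne_zero hb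
  rw [mono_succ_right, coeff_mul_X, Nat.succ_sub_one]

lemma coeff_mul_X0_zero (b : ℕ) (p : MvPolynomial (Fin 2) ℤ) :
    coeff (mono 0 b) (p * X 0) = 0 := by
  rw [coeff_mul_X', if_neg]
  simp [mono, Finsupp.single_apply]

lemma coeff_mul_X1_zero (a : ℕ) (p : MvPolynomial (Fin 2) ℤ) :
    coeff (mono a 0) (p * X 1) = 0 := by
  rw [coeff_mul_X', if_neg]
  simp [mono, Finsupp.single_apply]

lemma Q4_zero : Q4 0 = M4 := by simp [Q4]

lemma Q4_succ (n : ℕ) : Q4 (n + 1) = Q4 n * X 0 * X 1 + Q4 n * X 0 + Q4 n * X 1 + Q4 n := by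
  unfold Q4; ring

lemma c00 (n : ℕ) : coeff (mono 0 0) (Q4 n) = 0 := by
  induction n with
  | zero => rw [Q4_zero, coeff_M4]; norm_num
  | succ n ih =>
    rw [Q4_succ]
    simp [coeff_add, coeff_mul_X0_zero, coeff_mul_X1_zero, ih]

lemma c10 (n : ℕ) : coeff (mono 1 0) (Q4 n) = 0 := by
  induction n with
  | zero => rw [Q4_zero, coeff_M4]; norm_num
  | succ n ih =>
    rw [Q4_succ]
    simp [coeff_add, coeff_mul_X0, coeff_mul_X1_zero, ih, c00]

lemma c01 (n : ℕ) : coeff (mono 0 1) (Q4 n) = 0 := by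
  induction n with
  | zero => rw [Q4_zero, coeff_M4]; norm_num
  | succ n ih =>
    rw [Q4_succ]
    simp [coeff_add, coeff_mul_X1, coeff_mul_X0_zero, ih, c00]

lemma c20 (n : ℕ) : coeff (mono 2 0) (Q4 n) = -1 := by
  induction n with
  | zero => rw [Q4_zero, coeff_M4]; norm_num
  | succ n ih =>
    rw [Q4_succ]
    simp [coeff_add, coeff_mul_X0, coeff_mul_X1_zero, ih, c10]

lemma c02 (n : ℕ) : coeff (mono 0 2) (Q4 n) = -1 := by
  induction n with
  | zero => rw [Q4_zero, coeff_M4]; norm_num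
  | succ n ih =>
    rw [Q4_succ]
    simp [coeff_add, coeff_mul_X1, coeff_mul_X0_zero, ih, c01]

lemma c11 (n : ℕ) : coeff (mono 1 1) (Q4 n) = 2 := by
  induction n with
  | zero => rw [Q4_zero, coeff_M4]; norm_num
  | succ n ih =>
    rw [Q4_succ]
    simp [coeff_add, coeff_mul_X0, coeff_mul_X1, ih, c00, c10, c01]

lemma c21 (n : ℕ) : coeff (mono 2 1) (Q4 n) = n := by
  induction n with
  | zero => rw [Q4_zero, coeff_M4]; norm_num
  | succ n ih =>
    rw [Q4_succ]
    simp [coeff_add, coeff_mul_X0, coeff_mul_X1, ih, c20, c11, c10]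
    ring

lemma c12 (n : ℕ) : coeff (mono 1 2) (Q4 n) = n := by
  induction n with
  | zero => rw [Q4_zero, coeff_M4]; norm_num
  | succ n ih =>
    rw [Q4_succ]
    simp [coeff_add, coeff_mul_X0, coeff_mul_X1, ih, c02, c11, c01]
    ring

lemma c22 (n : ℕ) : coeff (mono 2 2) (Q4 n) = (n : ℤ) ^ 2 + n - 2 := by
  induction n with
  | zero => rw [Q4_zero, coeff_M4]; norm_num
  | succ n ih =>
    rw [Q4_succ]
    simp only [coeff_add, coeff_mul_X0, coeff_mul_X1, ih, c21, c12, c11, ne_eq,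
      OfNat.ofNat_ne_zero, not_false_eq_true, Nat.reduceSub]
    push_cast; ring

/-- The coefficient of `z²ω²` in `(z+1)^(D−2)·(ω+1)^(D−2)·(z−ω)²·(zω−1)` is `D² − 3D`:
the modular integral computing the zeroth Seeley–DeWitt coefficient of the massless
`N = 4` spinning particle. -/
theorem coeff_z2w2_massless_measure (D : ℕ) (hD : 2 ≤ D) :
    MvPolynomial.coeff (Finsupp.single (0 : Fin 2) 2 + Finsupp.single (1 : Fin 2) 2)
        (((X 0 + 1) ^ (D - 2) * (X 1 + 1) ^ (D - 2) * (X 0 - X 1) ^ 2 *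
          (X 0 * X 1 - 1) : MvPolynomial (Fin 2) ℤ)) =
      (D : ℤ) ^ 2 - 3 * (D : ℤ) := by
  have h : ((X 0 + 1) ^ (D - 2) * (X 1 + 1) ^ (D - 2) * (X 0 - X 1) ^ 2 *
      (X 0 * X 1 - 1) : MvPolynomial (Fin 2) ℤ) = Q4 (D - 2) := by
    unfold Q4 M4; ring
  rw [h]
  rw [show (Finsupp.single (0 : Fin 2) 2 + Finsupp.single (1 : Fin 2) 2) = mono 2 2 from rfl,
    c22 (D - 2)]
  have h2 : ((D - 2 : ℕ) : ℤ) = (D : ℤ) - 2 := by omega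
  rw [h2]; ring
end

section
/- Let n be a natural number and let R : Fin n → Fin n → Fin n → Fin n → ℝ satisfy, for all indices: R(a,b,c,d) = −R(b,a,c,d); R(a,b,c,d) = R(c,d,a,b); and the first Bianchi identity R(a,b,c,d) + R(a,c,d,b) + R(a,d,b,c) = 0. Then Σ_{a,b,c,d,e,f} R(a,b,c,d)·R(a,b,e,f)·R(c,e,d,f) = (1/2)·Σ_{a,b,c,d,e,f} R(a,b,c,d)·R(a,b,e,f)·R(c,d,e,f), where all sums run over Fin n. -/
/-- For an algebraic curvature tensor `R` (antisymmetric in the first pair, symmetric under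
pair exchange, satisfying the first Bianchi identity),
`Σ R(a,b,c,d)·R(a,b,e,f)·R(c,e,d,f) = (1/2)·Σ R(a,b,c,d)·R(a,b,e,f)·R(c,d,e,f)`. -/
theorem curvature_cubic_identity_half (n : ℕ) (R : Fin n → Fin n → Fin n → Fin n → ℝ)
    (hanti : ∀ a b c d, R a b c d = -R b a c d)
    (hpair : ∀ a b c d, R a b c d = R c d a b)
    (hbianchi : ∀ a b c d, R a b c d + R a c d b + R a d b c = 0) :
    (∑ a : Fin n, ∑ b : Fin n, ∑ c : Fin n, ∑ d : Fin n, ∑ e : Fin n, ∑ f : Fin n,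
        R a b c d * R a b e f * R c e d f) =
      (1 / 2) * ∑ a : Fin n, ∑ b : Fin n, ∑ c : Fin n, ∑ d : Fin n, ∑ e : Fin n, ∑ f : Fin n,
        R a b c d * R a b e f * R c d e f := by
  -- antisymmetry in the last pair of indices
  have hanti2 : ∀ a b c d, R a b c d = -R a b d c := by
    intro a b c d
    rw [hpair a b c d, hanti c d a b, hpair d c a b]
  -- Bianchi rewritten: R c e d f = R c d e f - R c f e d
  have key : ∀ c d e f, R c e d f = R c d e f - R c f e d := by
    intro c d e f
    have h0 := hbianchi c d f e
    have h1 : R c d f e = -R c d e f := hanti2 c d e f ▸ (hanti2 c d f e)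
    linarith
  have split : ∀ a b c d e f : Fin n,
      R a b c d * R a b e f * R c e d f
        = R a b c d * R a b e f * R c d e f - R a b c d * R a b e f * R c f e d := by
    intro a b c d e f
    rw [key c d e f]; ring
  -- Z equals the LHS (relabel c ↔ d)
  have hZ : (∑ a : Fin n, ∑ b : Fin n, ∑ c : Fin n, ∑ d : Fin n, ∑ e : Fin n, ∑ f : Fin n,
        R a b c d * R a b e f * R c f e d)
      = (∑ a : Fin n, ∑ b : Fin n, ∑ c : Fin n, ∑ d : Fin n, ∑ e : Fin n, ∑ f : Fin n,
        R a b c d * R a b e f * R c e d f) := by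
    refine Finset.sum_congr rfl fun a _ => Finset.sum_congr rfl fun b _ => ?_
    rw [Finset.sum_comm]
    refine Finset.sum_congr rfl fun c _ => Finset.sum_congr rfl fun d _ =>
      Finset.sum_congr rfl fun e _ => Finset.sum_congr rfl fun f _ => ?_
    have h1 : R a b d c = -R a b c d := by rw [hanti2 a b c d]; ring
    have h2 : R d f e c = -R c e d f := by
      rw [hpair d f e c, hanti e c d f]
    rw [h1, h2]; ring
  have hA : (∑ a : Fin n, ∑ b : Fin n, ∑ c : Fin n, ∑ d : Fin n, ∑ e : Fin n, ∑ f : Fin n,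
        R a b c d * R a b e f * R c e d f)
      = (∑ a : Fin n, ∑ b : Fin n, ∑ c : Fin n, ∑ d : Fin n, ∑ e : Fin n, ∑ f : Fin n,
        R a b c d * R a b e f * R c d e f)
        - (∑ a : Fin n, ∑ b : Fin n, ∑ c : Fin n, ∑ d : Fin n, ∑ e : Fin n, ∑ f : Fin n,
        R a b c d * R a b e f * R c f e d) := by
    simp only [split, Finset.sum_sub_distrib]
  rw [hZ] at hA
  linarith
end

section
/- Let n be a natural number and let R : Fin n → Fin n → Fin n → Fin n → ℝ satisfy, for all indices: R(a,b,c,d) = −R(b,a,c,d); R(a,b,c,d) = R(c,d,a,b); and the first Bianchi identity R(a,b,c,d) + R(a,c,d,b) + R(a,d,b,c) = 0. Then Σ_{a,b,c,d,e,f} R(a,b,c,d)·R(a,e,b,f)·R(c,e,d,f) = (1/4)·Σ_{a,b,c,d,e,f} R(a,b,c,d)·R(c,d,e,f)·R(e,f,a,b), where all sums run over Fin n. -/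
private def S6 {n : ℕ} (g : Fin n → Fin n → Fin n → Fin n → Fin n → Fin n → ℝ) : ℝ :=
  ∑ a : Fin n, ∑ b : Fin n, ∑ c : Fin n, ∑ d : Fin n, ∑ e : Fin n, ∑ f : Fin n, g a b c d e f

private lemma S6_congr {n : ℕ} {g h : Fin n → Fin n → Fin n → Fin n → Fin n → Fin n → ℝ}
    (H : ∀ a b c d e f, g a b c d e f = h a b c d e f) : S6 g = S6 h := by
  unfold S6
  exact Finset.sum_congr rfl fun a _ => Finset.sum_congr rfl fun b _ =>
    Finset.sum_congr rfl fun c _ => Finset.sum_congr rfl fun d _ =>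
    Finset.sum_congr rfl fun e _ => Finset.sum_congr rfl fun f _ => H a b c d e f

private lemma S6_add {n : ℕ} (g h : Fin n → Fin n → Fin n → Fin n → Fin n → Fin n → ℝ) :
    S6 (fun a b c d e f => g a b c d e f + h a b c d e f) = S6 g + S6 h := by
  simp [S6, Finset.sum_add_distrib]

private lemma S6_swap_cd {n : ℕ} (g : Fin n → Fin n → Fin n → Fin n → Fin n → Fin n → ℝ) :
    S6 g = S6 (fun a b c d e f => g a b d c e f) := by
  unfold S6
  refine Finset.sum_congr rfl fun a _ => Finset.sum_congr rfl fun b _ => ?_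
  exact Finset.sum_comm

private lemma S6_swap_ef {n : ℕ} (g : Fin n → Fin n → Fin n → Fin n → Fin n → Fin n → ℝ) :
    S6 g = S6 (fun a b c d e f => g a b c d f e) := by
  unfold S6
  refine Finset.sum_congr rfl fun a _ => Finset.sum_congr rfl fun b _ =>
    Finset.sum_congr rfl fun c _ => Finset.sum_congr rfl fun d _ => ?_
  exact Finset.sum_comm

/-- For an algebraic curvature tensor `R` (antisymmetric in the first pair, symmetric under
pair exchange, satisfying the first Bianchi identity),
`Σ R(a,b,c,d)·R(a,e,b,f)·R(c,e,d,f) = (1/4)·Σ R(a,b,c,d)·R(c,d,e,f)·R(e,f,a,b)`. -/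
theorem curvature_cubic_identity_quarter (n : ℕ) (R : Fin n → Fin n → Fin n → Fin n → ℝ)
    (hanti : ∀ a b c d, R a b c d = -R b a c d)
    (hpair : ∀ a b c d, R a b c d = R c d a b)
    (hbianchi : ∀ a b c d, R a b c d + R a c d b + R a d b c = 0) :
    (∑ a : Fin n, ∑ b : Fin n, ∑ c : Fin n, ∑ d : Fin n, ∑ e : Fin n, ∑ f : Fin n,
        R a b c d * R a e b f * R c e d f) =
      (1 / 4) * ∑ a : Fin n, ∑ b : Fin n, ∑ c : Fin n, ∑ d : Fin n, ∑ e : Fin n, ∑ f : Fin n,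
        R a b c d * R c d e f * R e f a b := by
  -- antisymmetry in the second pair (derived)
  have hanti2 : ∀ a b c d, R a b c d = -R a b d c := by
    intro a b c d
    rw [hpair, hanti, hpair]
  set A : ℝ := S6 (fun a b c d e f => R a b c d * R a e b f * R c e d f) with hA
  set M : ℝ := S6 (fun a b c d e f => R a b c d * R a b e f * R c e d f) with hM
  set B : ℝ := S6 (fun a b c d e f => R a b c d * R c d e f * R e f a b) with hB
  -- Step I : M = 2 A  (Bianchi on middle factor of A)
  have step1 : M = A + A := by
    have h0 : S6 (fun a b c d e f =>
        R a b c d * (R a e b f + R a b f e + R a f e b) * R c e d f) = 0 := by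
      have : ∀ a b c d e f : Fin n,
          R a b c d * (R a e b f + R a b f e + R a f e b) * R c e d f = 0 := by
        intro a b c d e f
        rw [hbianchi a e b f]; ring
      simp [S6, this]
    have hsplit : S6 (fun a b c d e f =>
        R a b c d * (R a e b f + R a b f e + R a f e b) * R c e d f)
        = A + (S6 (fun a b c d e f => R a b c d * R a b f e * R c e d f)
           + S6 (fun a b c d e f => R a b c d * R a f e b * R c e d f)) := by
      rw [hA, ← S6_add, ← S6_add]
      exact S6_congr fun a b c d e f => by ring
    have hq : S6 (fun a b c d e f => R a b c d * R a b f e * R c e d f) = -M := by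
      rw [hM, ← neg_neg (S6 _)]
      congr 1
      rw [show -S6 (fun a b c d e f : Fin n => R a b c d * R a b f e * R c e d f)
          = S6 (fun a b c d e f : Fin n => -(R a b c d * R a b f e * R c e d f)) by
        simp [S6, Finset.sum_neg_distrib]]
      exact S6_congr fun a b c d e f => by rw [hanti2 a b f e]; ring
    have hr : S6 (fun a b c d e f => R a b c d * R a f e b * R c e d f) = A := by
      rw [S6_swap_cd, S6_swap_ef, hA]
      refine S6_congr fun a b c d e f => ?_
      -- goal: R a b d c * R a e f b * R d f c e = R a b c d * R a e b f * R c e d f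
      rw [hanti2 a b d c, hanti2 a e f b, hpair d f c e]
      ring
    rw [h0, hq, hr] at hsplit
    linarith
  -- Step II : B = 2 M  (Bianchi on middle factor of B)
  have step2 : B = M + M := by
    have h0 : S6 (fun a b c d e f =>
        R a b c d * (R c d e f + R c e f d + R c f d e) * R e f a b) = 0 := by
      have : ∀ a b c d e f : Fin n,
          R a b c d * (R c d e f + R c e f d + R c f d e) * R e f a b = 0 := by
        intro a b c d e f
        rw [hbianchi c d e f]; ring
      simp [S6, this]
    have hsplit : S6 (fun a b c d e f =>
        R a b c d * (R c d e f + R c e f d + R c f d e) * R e f a b)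
        = B + (S6 (fun a b c d e f => R a b c d * R c e f d * R e f a b)
           + S6 (fun a b c d e f => R a b c d * R c f d e * R e f a b)) := by
      rw [hB, ← S6_add, ← S6_add]
      exact S6_congr fun a b c d e f => by ring
    have hq : S6 (fun a b c d e f => R a b c d * R c e f d * R e f a b) = -M := by
      rw [hM, ← neg_neg (S6 _)]
      congr 1
      rw [show -S6 (fun a b c d e f : Fin n => R a b c d * R c e f d * R e f a b)
          = S6 (fun a b c d e f : Fin n => -(R a b c d * R c e f d * R e f a b)) by
        simp [S6, Finset.sum_neg_distrib]]
      refine S6_congr fun a b c d e f => ?_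
      rw [hanti2 c e f d, hpair e f a b]
      ring
    have hr : S6 (fun a b c d e f => R a b c d * R c f d e * R e f a b) = -M := by
      rw [S6_swap_ef, hM, ← neg_neg (S6 _)]
      congr 1
      rw [show -S6 (fun a b c d e f : Fin n => R a b c d * R c e d f * R f e a b)
          = S6 (fun a b c d e f : Fin n => -(R a b c d * R c e d f * R f e a b)) by
        simp [S6, Finset.sum_neg_distrib]]
      refine S6_congr fun a b c d e f => ?_
      rw [hanti f e a b, hpair e f a b]
      ring
    rw [h0, hq, hr] at hsplit
    linarith
  show A = (1 / 4) * B
  linarith [step1, step2]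
end

section
/- Let z ∈ ℝ with z > 0. Define F : ℝ × ℝ → ℝ by F(a, b) = exp((b − a)·log z)/(z + 1) · (z if b < a, and −1 if a ≤ b). Then ∫₀¹ ∫₀¹ τ(τ − 1)·F(σ, τ)²·F(τ, σ)² dσ dτ = −z²/(6(z + 1)⁴). -/
/-!
Off the diagonal the two propagators in `F(σ, τ) F(τ, σ)` carry opposite exponentials
`z^(τ-σ) z^(σ-τ) = 1` and exactly one of the step factors is `z`, the other `-1`; hence
`F(σ, τ) F(τ, σ) = -z/(z+1)²` for `σ ≠ τ`. The diagonal is a null set, so the inner integral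
is `τ(τ-1) z²/(z+1)⁴`, and `∫₀¹ τ(τ-1) dτ = -1/6`.
-/

open Real intervalIntegral

noncomputable def fermionPropagator (z : ℝ) (p : ℝ × ℝ) : ℝ :=
  exp ((p.2 - p.1) * log z) / (z + 1) * (if p.2 < p.1 then z else -1)

theorem fermionPropagator_mul_swap (z : ℝ) {a b : ℝ} (hab : a ≠ b) :
    fermionPropagator z (a, b) * fermionPropagator z (b, a) = -z / (z + 1) ^ 2 := by
  have hexp : exp ((b - a) * log z) * exp ((a - b) * log z) = 1 := by
    rw [← exp_add, ← exp_zero]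
    ring_nf
  rcases hab.lt_or_gt with h | h <;>
    simp only [fermionPropagator, if_pos h, if_neg h.not_gt] <;>
    -- `ring` normalizes `(z + 1)⁻¹ ^ 2` and `((z + 1) ^ 2)⁻¹` differently unless `z + 1` is atomic
    generalize z + 1 = w <;>
    linear_combination (-z / w ^ 2) * hexp

theorem intervalIntegral_eq_of_eq_of_ne {E : Type*} [NormedAddCommGroup E] [NormedSpace ℝ E]
    [CompleteSpace E] {f : ℝ → E} {a b x₀ : ℝ} {c : E} (h : ∀ x ≠ x₀, f x = c) :
    ∫ x in a..b, f x = (b - a) • c := by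
  rw [← integral_const]
  exact integral_congr_ae ((MeasureTheory.volume.ae_ne x₀).mono fun x hx _ => h x hx)

theorem integral_mul_sub_one_zero_one : ∫ x in (0 : ℝ)..1, x * (x - 1) = -1 / 6 := by
  norm_num [mul_sub, ← sq, integral_sub, integral_pow]

theorem worldline_integral_single_flavor_general (z : ℝ) (F : ℝ × ℝ → ℝ)
    (hF : F = fun p => Real.exp ((p.2 - p.1) * Real.log z) / (z + 1) *
      (if p.2 < p.1 then z else -1)) :
    (∫ τ in (0 : ℝ)..1, ∫ σ in (0 : ℝ)..1,
        τ * (τ - 1) * F (σ, τ) ^ 2 * F (τ, σ) ^ 2) =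
      -z ^ 2 / (6 * (z + 1) ^ 4) := by
  obtain rfl : F = fermionPropagator z := hF
  have inner (τ : ℝ) : ∫ σ in (0 : ℝ)..1,
      τ * (τ - 1) * fermionPropagator z (σ, τ) ^ 2 * fermionPropagator z (τ, σ) ^ 2 =
        z ^ 2 / (z + 1) ^ 4 * (τ * (τ - 1)) := by
    rw [intervalIntegral_eq_of_eq_of_ne (x₀ := τ) fun σ hσ => by
      rw [mul_assoc, ← mul_pow, fermionPropagator_mul_swap z hσ]]
    generalize z + 1 = w
    ring
  simp_rw [inner]
  rw [integral_const_mul, integral_mul_sub_one_zero_one]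
  generalize z + 1 = w
  ring

/-- Worldline integral from the `a₃` Seeley–DeWitt computation: with the `N = 2` fermionic
propagator `F(a, b) = z^(b−a)/(z+1)·(z·θ(a−b) − θ(b−a))` and the coincident-point bosonic
propagator `τ(τ−1)`, one has
`∫₀¹∫₀¹ τ(τ−1)·F(σ,τ)²·F(τ,σ)² dσ dτ = −z²/(6(z+1)⁴)`. -/
theorem worldline_integral_single_flavor (z : ℝ) (hz : 0 < z) (F : ℝ × ℝ → ℝ)
    (hF : F = fun p => Real.exp ((p.2 - p.1) * Real.log z) / (z + 1) *
      (if p.2 < p.1 then z else -1)) :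
    (∫ τ in (0 : ℝ)..1, ∫ σ in (0 : ℝ)..1,
        τ * (τ - 1) * F (σ, τ) ^ 2 * F (τ, σ) ^ 2) =
      -z ^ 2 / (6 * (z + 1) ^ 4) :=
  worldline_integral_single_flavor_general z F hF
end

section
/- Let n be a natural number and A an n×n real matrix. Define φ : ℝ → Matrix (Fin n) (Fin n) ℝ by the series φ(z) = Σ_{k=0}^∞ ((−1)^k · z^(2k+1)/(2k+1)!) · A^(2k) (which converges for every z). Then φ(0) = 0, φ is differentiable with φ'(0) = 1 (the identity matrix), and for every z ∈ ℝ, φ''(z) = −(A·A)·φ(z). -/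
attribute [local instance] Matrix.normedAddCommGroup Matrix.normedSpace

noncomputable def phiMat {n : ℕ} (A : Matrix (Fin n) (Fin n) ℝ) (z : ℝ) :
    Matrix (Fin n) (Fin n) ℝ :=
  ∑' k : ℕ, (((-1 : ℝ) ^ k * z ^ (2 * k + 1)) / ((2 * k + 1).factorial : ℝ)) • A ^ (2 * k)

/-!
Write `u'' = T u` as the first-order system `(u, u')' = M (u, u')` with `M (u, v) = (v, T u)`.
Its solution with `u 0 = 0`, `u' 0 = x` is the first component of `exp (z • M) (0, x)`, and
since `M ^ (2k+1) (0, x) = (T ^ k x, 0)` while even powers keep the first component zero,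
expanding the exponential gives `u z = ∑ z ^ (2k+1) / (2k+1)! • T ^ k x`. The matrix `φ` is the
case `T = (-(A * A)) * ·`, `x = 1`.
-/

open NormedSpace ContinuousLinearMap
open scoped Nat

section Companion

variable {𝕂 E : Type*} [RCLike 𝕂] [NormedAddCommGroup E] [NormedSpace 𝕂 E]

noncomputable def companion (T : E →L[𝕂] E) : E × E →L[𝕂] E × E :=
  (snd 𝕂 E E).prod (T.comp (fst 𝕂 E E))

@[simp]
lemma companion_apply (T : E →L[𝕂] E) (p : E × E) : companion T p = (p.2, T p.1) := rfl

lemma companion_pow_two_mul_apply (T : E →L[𝕂] E) (k : ℕ) (p : E × E) :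
    (companion T ^ (2 * k)) p = ((T ^ k) p.1, (T ^ k) p.2) := by
  induction k generalizing p with
  | zero => simp only [mul_zero, pow_zero, one_apply_eq_self]
  | succ k ih =>
    rw [mul_add_one, pow_add, sq, mul_apply_eq_comp, mul_apply_eq_comp, ih]
    simp only [companion_apply, pow_succ, mul_apply_eq_comp]

/-- Formally `sinh (z √T) / √T` applied to `x`. -/
noncomputable def sinhSeries (T : E →L[𝕂] E) (x : E) (z : 𝕂) : E :=
  ∑' k : ℕ, (z ^ (2 * k + 1) / (2 * k + 1)!) • (T ^ k) x

variable [CompleteSpace E]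

lemma hasSum_sinhSeries (T : E →L[𝕂] E) (x : E) (z : 𝕂) :
    HasSum (fun k : ℕ => (z ^ (2 * k + 1) / (2 * k + 1)!) • (T ^ k) x)
      (exp (z • companion T) (0, x)).1 := by
  have hexp := (exp_series_hasSum_exp' (𝕂 := 𝕂) (z • companion T)).mapL
    ((fst 𝕂 E E).comp (apply 𝕂 (E × E) (0, x)))
  have hodd : Function.Injective fun k : ℕ => 2 * k + 1 := fun _ _ h => by simpa using h
  rw [← hodd.hasSum_iff] at hexp
  · convert hexp using 2 with k
    simp only [Function.comp_apply, comp_apply, apply_apply, coe_fst', smul_pow, smul_smul,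
      smul_apply, Prod.smul_fst, pow_succ, mul_apply_eq_comp, companion_apply,
      companion_pow_two_mul_apply]
    rw [div_eq_inv_mul]
    norm_cast
  · intro m hm
    obtain ⟨k, rfl⟩ : Even m := by simpa [eq_comm] using hm
    simp only [comp_apply, apply_apply, coe_fst', smul_pow, smul_apply, Prod.smul_fst, ← two_mul,
      companion_pow_two_mul_apply, map_zero, smul_zero]

lemma sinhSeries_eq_fst_exp_smul_companion (T : E →L[𝕂] E) (x : E) :
    sinhSeries T x = fun z => (exp (z • companion T) (0, x)).1 :=
  funext fun z => (hasSum_sinhSeries T x z).tsum_eq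

lemma hasDerivAt_exp_smul_apply {F : Type*} [NormedAddCommGroup F] [NormedSpace 𝕂 F]
    [CompleteSpace F] (M : F →L[𝕂] F) (v : F) (t : 𝕂) :
    HasDerivAt (fun s : 𝕂 => exp (s • M) v) (M (exp (t • M) v)) t :=
  (apply 𝕂 F v).hasFDerivAt.comp_hasDerivAt t (hasDerivAt_exp_smul_const' M t)

lemma hasDerivAt_fst_exp_smul_companion (T : E →L[𝕂] E) (p : E × E) (t : 𝕂) :
    HasDerivAt (fun s : 𝕂 => (exp (s • companion T) p).1) (exp (t • companion T) p).2 t :=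
  (fst 𝕂 E E).hasFDerivAt.comp_hasDerivAt t (hasDerivAt_exp_smul_apply _ p t)

lemma hasDerivAt_snd_exp_smul_companion (T : E →L[𝕂] E) (p : E × E) (t : 𝕂) :
    HasDerivAt (fun s : 𝕂 => (exp (s • companion T) p).2) (T (exp (t • companion T) p).1) t :=
  (snd 𝕂 E E).hasFDerivAt.comp_hasDerivAt t (hasDerivAt_exp_smul_apply _ p t)

theorem sinhSeries_initial_value_problem (T : E →L[𝕂] E) (x : E) :
    sinhSeries T x 0 = 0 ∧ Differentiable 𝕂 (sinhSeries T x) ∧ deriv (sinhSeries T x) 0 = x ∧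
      ∀ z, deriv (deriv (sinhSeries T x)) z = T (sinhSeries T x z) := by
  have hderiv : deriv (sinhSeries T x) = fun t => (exp (t • companion T) (0, x)).2 := by
    rw [sinhSeries_eq_fst_exp_smul_companion]
    exact funext fun t => (hasDerivAt_fst_exp_smul_companion T _ t).deriv
  refine ⟨by simp [sinhSeries_eq_fst_exp_smul_companion], fun z => ?_, by simp [hderiv],
    fun z => ?_⟩
  · rw [sinhSeries_eq_fst_exp_smul_companion]
    exact (hasDerivAt_fst_exp_smul_companion T _ z).differentiableAt
  · rw [hderiv, (hasDerivAt_snd_exp_smul_companion T _ z).deriv,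
      sinhSeries_eq_fst_exp_smul_companion]

end Companion

lemma phiMat_eq_sinhSeries {n : ℕ} (A : Matrix (Fin n) (Fin n) ℝ) :
    phiMat A = sinhSeries (LinearMap.mulLeft ℝ (-(A * A))).toContinuousLinearMap 1 := by
  funext z
  refine tsum_congr fun k => ?_
  have hpow : ∀ X, ((LinearMap.mulLeft ℝ (-(A * A))).toContinuousLinearMap ^ k) X =
      (-(A * A)) ^ k * X := by
    induction k with
    | zero => simp
    | succ k ih => intro X; rw [pow_succ, mul_apply_eq_comp, ih, pow_succ, mul_assoc]; rfl
  -- `erw`: `hpow` is stated with `Matrix`'s own topology, the series with the sup norm's.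
  erw [hpow]
  rw [mul_one, ← neg_one_smul ℝ (A * A), smul_pow, ← sq, ← pow_mul, smul_smul]
  congr 1
  ring

/-- Gel'fand–Yaglom initial value problem: `φ(0) = 0`, `φ` is differentiable with
`φ'(0) = 1`, and `φ''(z) = −A²·φ(z)` for every `z`. -/
theorem phiMat_initial_value_problem (n : ℕ) (A : Matrix (Fin n) (Fin n) ℝ) :
    phiMat A 0 = 0 ∧ Differentiable ℝ (phiMat A) ∧ deriv (phiMat A) 0 = 1 ∧
      ∀ z : ℝ, deriv (deriv (phiMat A)) z = -((A * A) * phiMat A z) := by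
  obtain ⟨h0, hdiff, hd0, hdd⟩ :=
    sinhSeries_initial_value_problem (LinearMap.mulLeft ℝ (-(A * A))).toContinuousLinearMap 1
  rw [phiMat_eq_sinhSeries]
  exact ⟨h0, hdiff, hd0, fun z => (hdd z).trans (neg_mul _ _)⟩
end
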